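/- Let e ∈ E(T) and v ∈ U_e with S(e, v) ≠ ∅. Every v-best cut edge for e is a v-best swap edge for e; that is, if f ∈ S(e, v) minimizes φ_e(f) = max_{g ∈ S(e)} φ(f, g) among all edges of S(e, v), then f minimizes σ_{G−e}(T_{e/f}) among all edges of S(e, v). -/

import Mathlib

open SimpleGraph

variable {V : Type*} [Fintype V] [DecidableEq V]

/-- Total weight of a walk: the sum of the weights of its edges. -/
def pathWeight (w : Sym2 V → ℝ) {G : SimpleGraph V} {x y : V} (p : G.Walk x y) : ℝ :=
  (p.edges.map w).sum

/-- Weighted shortest-path distance in `G` between `x` and `y`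
(infimum of the weights of all paths from `x` to `y`);
in a tree this is the weight of the unique path. -/
noncomputable def wDist (G : SimpleGraph V) (w : Sym2 V → ℝ) (x y : V) : ℝ :=
  sInf {r | ∃ p : G.Walk x y, p.IsPath ∧ r = pathWeight w p}

/-- `G` is 2-edge-connected: connected, and still connected after deleting any edge. -/
def TwoEdgeConnected (G : SimpleGraph V) : Prop :=
  G.Connected ∧ ∀ e ∈ G.edgeSet, (G.deleteEdges {e}).Connected

/-- `U_e`: vertices of the component of `T - e` containing the root. -/
def Ue (T : SimpleGraph V) (root : V) (e : Sym2 V) : Set V :=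
  {v | (T.deleteEdges {e}).Reachable root v}

/-- `D_e`: vertices of the component of `T - e` not containing the root. -/
def De (T : SimpleGraph V) (root : V) (e : Sym2 V) : Set V :=
  {v | ¬ (T.deleteEdges {e}).Reachable root v}

/-- `VSwap G T root e v u` says that `(v, u)`, with `v ∈ U_e` and `u ∈ D_e`,
is (the canonically oriented representation of) a swap edge for `e`:
an edge of `G`, different from `e`, whose endpoints lie in the two
different components of `T - e`. -/
def VSwap (G T : SimpleGraph V) (root : V) (e : Sym2 V) (v u : V) : Prop :=
  G.Adj v u ∧ s(v, u) ≠ e ∧ v ∈ Ue T root e ∧ u ∈ De T root e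

/-- `φ(f, g)` for the swap edge `f = (v, u)` (with `v ∈ U_e`, `u ∈ D_e`) and the swap
edge `g = (x, y)` (with `x ∈ U_e`, `y ∈ D_e`):
`(d_T(x, v) + w(f) + d_T(u, y)) / w(g)`. -/
noncomputable def phi (T : SimpleGraph V) (w : Sym2 V → ℝ) (v u x y : V) : ℝ :=
  (wDist T w x v + w (s(v, u)) + wDist T w u y) / w (s(x, y))

/-- `φ_e(f) = max_{g ∈ S(e)} φ(f, g)` for the swap edge `f = (v, u)`. -/
noncomputable def phiMax (G T : SimpleGraph V) (w : Sym2 V → ℝ) (root : V) (e : Sym2 V)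
    (v u : V) : ℝ :=
  sSup {r | ∃ x y, VSwap G T root e x y ∧ r = phi T w v u x y}

/-- The swap tree `T_{e/f}`: delete `e` from `T` and insert `f`. -/
def swapTree (T : SimpleGraph V) (e f : Sym2 V) : SimpleGraph V :=
  fromEdgeSet ((T.edgeSet \ {e}) ∪ {f})

/-- The stretch factor `σ_H(T')` of `T'` w.r.t. `H`:
the maximum over pairs of distinct vertices of `d_{T'}(x,y) / d_H(x,y)`. -/
noncomputable def stretch (H T' : SimpleGraph V) (w : Sym2 V → ℝ) : ℝ :=
  sSup {r | ∃ x y : V, x ≠ y ∧ r = wDist T' w x y / wDist H w x y}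

/-!
Deleting `e` splits `T` into the components `U_e ∋ v` and `D_e ∋ u`, and `f = (v, u)` is a
bridge of `T_{e/f}` whose removal gives back `T - e`. Hence distances in `T_{e/f}` are read off
`T - e`: an edge `g = (x, y)` of `G - e` inside one component keeps its tree distance
`d_T(x, y)`, while for a crossing edge `d_{T_{e/f}}(x, y) / w(g) = φ(f, g)`. As the stretch of a
spanning tree is attained on edges of the graph, `σ_{G-e}(T_{e/f}) = max(C_e, φ_e(f))`, where
`C_e = sameSideStretch G T w e` does not depend on `f`; so minimizing `φ_e` minimizes the stretch.
-/

section PathWeight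

omit [Fintype V] [DecidableEq V]

variable {w : Sym2 V → ℝ} {H H' : SimpleGraph V}

@[simp] lemma pathWeight_nil {x : V} : pathWeight w (Walk.nil : H.Walk x x) = 0 := by
  simp [pathWeight]

@[simp] lemma pathWeight_cons {x y z : V} (h : H.Adj x y) (p : H.Walk y z) :
    pathWeight w (Walk.cons h p) = w s(x, y) + pathWeight w p := by
  simp [pathWeight]

@[simp] lemma pathWeight_append {x y z : V} (p : H.Walk x y) (q : H.Walk y z) :
    pathWeight w (p.append q) = pathWeight w p + pathWeight w q := by
  simp [pathWeight, Walk.edges_append]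

@[simp] lemma pathWeight_reverse {x y : V} (p : H.Walk x y) :
    pathWeight w p.reverse = pathWeight w p := by
  simp [pathWeight, Walk.edges_reverse, List.sum_reverse]

@[simp] lemma pathWeight_mapLe (hle : H ≤ H') {x y : V} (p : H.Walk x y) :
    pathWeight w (p.mapLe hle) = pathWeight w p := by
  simp [pathWeight]

lemma pathWeight_nonneg (hw : ∀ a ∈ H.edgeSet, 0 ≤ w a) {x y : V} (p : H.Walk x y) :
    0 ≤ pathWeight w p :=
  List.sum_nonneg fun _ hr ↦ by
    obtain ⟨a, ha, rfl⟩ := List.mem_map.mp hr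
    exact hw a (p.edges_subset_edgeSet ha)

lemma pathWeight_bypass_le [DecidableEq V] (hw : ∀ a ∈ H.edgeSet, 0 ≤ w a) {x y : V}
    (p : H.Walk x y) : pathWeight w p.bypass ≤ pathWeight w p :=
  (p.edges_bypass_sublist_edges.map w).sum_le_sum fun _ hr ↦ by
    obtain ⟨a, ha, rfl⟩ := List.mem_map.mp hr
    exact hw a (p.edges_subset_edgeSet ha)

end PathWeight

namespace SimpleGraph

omit [Fintype V] [DecidableEq V]

variable {w : Sym2 V → ℝ} {H : SimpleGraph V}

lemma Walk.exists_deleteEdges_or_cross (hw : ∀ c ∈ H.edgeSet, 0 ≤ w c) {a b x y : V}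
    (p : H.Walk x y) :
    (∃ q : (H.deleteEdges {s(a, b)}).Walk x y, pathWeight w q ≤ pathWeight w p) ∨
      ∃ a' b', s(a', b') = s(a, b) ∧ ∃ (q₁ : (H.deleteEdges {s(a, b)}).Walk x a')
        (q₂ : (H.deleteEdges {s(a, b)}).Walk b' y),
        pathWeight w q₁ + w s(a, b) + pathWeight w q₂ ≤ pathWeight w p := by
  have hwF : ∀ c ∈ (H.deleteEdges {s(a, b)}).edgeSet, 0 ≤ w c :=
    fun c hc ↦ hw c (edgeSet_mono (deleteEdges_le _) hc)
  induction p with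
  | nil => exact Or.inl ⟨Walk.nil, le_rfl⟩
  | @cons x z y h p ih =>
    by_cases hab : s(x, z) = s(a, b)
    · have hwab : 0 ≤ w s(a, b) := hab ▸ hw _ h
      rcases ih with ⟨q, hq⟩ | ⟨a', b', hab', q₁, q₂, hq⟩
      · exact Or.inr ⟨x, z, hab, Walk.nil, q, by simp [← hab]; linarith⟩
      have hq₁ := pathWeight_nonneg hwF q₁
      rw [← hab, Sym2.eq_iff] at hab'
      rcases hab' with ⟨rfl, rfl⟩ | ⟨rfl, rfl⟩
      · exact Or.inr ⟨a', b', hab, Walk.nil, q₂, by simp [← hab]; linarith⟩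
      · exact Or.inl ⟨q₂, by simp [hab]; linarith⟩
    · have hxz : 0 ≤ w s(x, z) := hw _ h
      have hF : (H.deleteEdges {s(a, b)}).Adj x z := deleteEdges_adj.mpr ⟨h, hab⟩
      rcases ih with ⟨q, hq⟩ | ⟨a', b', hab', q₁, q₂, hq⟩
      · exact Or.inl ⟨Walk.cons hF q, by simp; linarith⟩
      · exact Or.inr ⟨a', b', hab', Walk.cons hF q₁, q₂, by simp; linarith⟩

lemma Reachable.reachable_deleteEdges_or {a b z : V} (h : H.Reachable a z) :
    (H.deleteEdges {s(a, b)}).Reachable a z ∨ (H.deleteEdges {s(a, b)}).Reachable b z := by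
  obtain ⟨p⟩ := h
  rcases p.exists_deleteEdges_or_cross (w := 0) (fun _ _ ↦ le_rfl) with
    ⟨q, -⟩ | ⟨a', b', hab, -, q₂, -⟩
  · exact Or.inl q.reachable
  · rcases Sym2.mem_iff.mp (hab ▸ Sym2.mem_mk_right a' b') with rfl | rfl
    exacts [Or.inl q₂.reachable, Or.inr q₂.reachable]

/-- Deleting one edge from a connected graph leaves at most two components. -/
lemma Connected.reachable_deleteEdges_or_or (hH : H.Connected) (e : Sym2 V) (x y z : V) :
    (H.deleteEdges {e}).Reachable x y ∨ (H.deleteEdges {e}).Reachable y z ∨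
      (H.deleteEdges {e}).Reachable x z := by
  cases e with | h a b =>
  rcases (hH a x).reachable_deleteEdges_or (b := b) with hx | hx <;>
  rcases (hH a y).reachable_deleteEdges_or (b := b) with hy | hy <;>
  rcases (hH a z).reachable_deleteEdges_or (b := b) with hz | hz <;>
  first
  | exact Or.inl (hx.symm.trans hy)
  | exact Or.inr (Or.inl (hy.symm.trans hz))
  | exact Or.inr (Or.inr (hx.symm.trans hz))

end SimpleGraph

section WeightedDistance

omit [DecidableEq V]

variable {w : Sym2 V → ℝ} {H H' : SimpleGraph V} {x y z : V}

omit [Fintype V] in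
lemma wDist_nonneg (hw : ∀ a ∈ H.edgeSet, 0 ≤ w a) (x y : V) : 0 ≤ wDist H w x y :=
  Real.sInf_nonneg fun _ ⟨p, _, hr⟩ ↦ hr ▸ pathWeight_nonneg hw p

omit [Fintype V] in
lemma wDist_le_pathWeight (hw : ∀ a ∈ H.edgeSet, 0 ≤ w a) (p : H.Walk x y) :
    wDist H w x y ≤ pathWeight w p := by
  classical
  calc wDist H w x y ≤ pathWeight w p.bypass :=
        csInf_le ⟨0, fun _ ⟨q, _, hr⟩ ↦ hr ▸ pathWeight_nonneg hw q⟩ ⟨_, p.bypass_isPath, rfl⟩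
    _ ≤ pathWeight w p := pathWeight_bypass_le hw p

omit [Fintype V] in
lemma le_wDist (hxy : H.Reachable x y) {r : ℝ} (h : ∀ p : H.Walk x y, r ≤ pathWeight w p) :
    r ≤ wDist H w x y := by
  classical
  obtain ⟨p⟩ := hxy
  exact le_csInf ⟨_, p.bypass, p.bypass_isPath, rfl⟩ fun _ ⟨q, _, hr⟩ ↦ hr ▸ h q

omit [Fintype V] in
lemma wDist_le_of_adj (hw : ∀ a ∈ H.edgeSet, 0 ≤ w a) (h : H.Adj x y) :
    wDist H w x y ≤ w s(x, y) := by
  simpa using wDist_le_pathWeight hw (Walk.cons h Walk.nil)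

omit [Fintype V] in
lemma wDist_self (hw : ∀ a ∈ H.edgeSet, 0 ≤ w a) (x : V) : wDist H w x x = 0 :=
  le_antisymm (by simpa using wDist_le_pathWeight hw (Walk.nil : H.Walk x x))
    (wDist_nonneg hw x x)

omit [Fintype V] in
lemma wDist_comm (x y : V) : wDist H w x y = wDist H w y x := by
  unfold wDist
  congr 1
  ext r
  constructor <;>
  · rintro ⟨p, hp, rfl⟩
    exact ⟨p.reverse, hp.reverse, (pathWeight_reverse p).symm⟩

omit [Fintype V] in
lemma wDist_le_wDist_of_le (hle : H ≤ H') (hw : ∀ a ∈ H'.edgeSet, 0 ≤ w a)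
    (hxy : H.Reachable x y) : wDist H' w x y ≤ wDist H w x y :=
  le_wDist hxy fun p ↦ by simpa using wDist_le_pathWeight hw (p.mapLe hle)

lemma exists_walk_pathWeight_eq_wDist (hxy : H.Reachable x y) :
    ∃ p : H.Walk x y, pathWeight w p = wDist H w x y := by
  classical
  obtain ⟨p⟩ := hxy
  have hne : {r | ∃ p : H.Walk x y, p.IsPath ∧ r = pathWeight w p}.Nonempty :=
    ⟨_, p.bypass, p.bypass_isPath, rfl⟩
  have hfin : {r | ∃ p : H.Walk x y, p.IsPath ∧ r = pathWeight w p}.Finite :=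
    (Set.finite_range fun p : H.Path x y ↦ pathWeight w (p : H.Walk x y)).subset
      fun _ ⟨p, hp, hr⟩ ↦ ⟨⟨p, hp⟩, hr.symm⟩
  obtain ⟨q, -, hq⟩ := hne.csInf_mem hfin
  exact ⟨q, hq.symm⟩

lemma wDist_triangle (hw : ∀ a ∈ H.edgeSet, 0 ≤ w a) (hxy : H.Reachable x y)
    (hyz : H.Reachable y z) : wDist H w x z ≤ wDist H w x y + wDist H w y z := by
  obtain ⟨p, hp⟩ := exists_walk_pathWeight_eq_wDist (w := w) hxy
  obtain ⟨q, hq⟩ := exists_walk_pathWeight_eq_wDist (w := w) hyz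
  simpa [hp, hq] using wDist_le_pathWeight hw (p.append q)

lemma wDist_pos (hw : ∀ a ∈ H.edgeSet, 0 < w a) (hxy : H.Reachable x y) (hne : x ≠ y) :
    0 < wDist H w x y := by
  obtain ⟨p, hp⟩ := exists_walk_pathWeight_eq_wDist (w := w) hxy
  rw [← hp]
  cases p with
  | nil => exact absurd rfl hne
  | cons h q =>
    rw [pathWeight_cons]
    exact add_pos_of_pos_of_nonneg (hw _ h) (pathWeight_nonneg (fun a ha ↦ (hw a ha).le) q)

end WeightedDistance

section Bridge

omit [DecidableEq V]

variable {w : Sym2 V → ℝ} {H : SimpleGraph V} {a b x y : V}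

omit [Fintype V] in
lemma SimpleGraph.IsBridge.wDist_eq_of_reachable (hab : H.IsBridge s(a, b))
    (hw : ∀ c ∈ H.edgeSet, 0 ≤ w c) (hxy : (H.deleteEdges {s(a, b)}).Reachable x y) :
    wDist H w x y = wDist (H.deleteEdges {s(a, b)}) w x y := by
  refine le_antisymm (wDist_le_wDist_of_le (deleteEdges_le _) hw hxy)
    (le_wDist (hxy.mono (deleteEdges_le _)) fun p ↦ ?_)
  rcases p.exists_deleteEdges_or_cross hw with ⟨q, hq⟩ | ⟨a', b', hab', q₁, q₂, -⟩
  · exact (wDist_le_pathWeight (fun c hc ↦ hw c (edgeSet_mono (deleteEdges_le _) hc)) q).trans hq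
  · have hr : (H.deleteEdges {s(a, b)}).Reachable a' b' :=
      q₁.reachable.symm.trans (hxy.trans q₂.reachable.symm)
    rw [Sym2.eq_iff] at hab'
    rcases hab' with ⟨rfl, rfl⟩ | ⟨rfl, rfl⟩
    exacts [(hab hr).elim, (hab hr.symm).elim]

lemma SimpleGraph.IsBridge.wDist_eq_of_reachable_left_right (hab : H.IsBridge s(a, b))
    (hw : ∀ c ∈ H.edgeSet, 0 ≤ w c) (hadj : H.Adj a b)
    (hxa : (H.deleteEdges {s(a, b)}).Reachable x a)
    (hby : (H.deleteEdges {s(a, b)}).Reachable b y) :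
    wDist H w x y = wDist (H.deleteEdges {s(a, b)}) w x a + w s(a, b) +
      wDist (H.deleteEdges {s(a, b)}) w b y := by
  have hwF : ∀ c ∈ (H.deleteEdges {s(a, b)}).edgeSet, 0 ≤ w c :=
    fun c hc ↦ hw c (edgeSet_mono (deleteEdges_le _) hc)
  apply le_antisymm
  · obtain ⟨p, hp⟩ := exists_walk_pathWeight_eq_wDist (w := w) hxa
    obtain ⟨q, hq⟩ := exists_walk_pathWeight_eq_wDist (w := w) hby
    simpa [hp, hq, add_assoc] using
      wDist_le_pathWeight hw ((p.mapLe (deleteEdges_le _)).append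
        (Walk.cons hadj (q.mapLe (deleteEdges_le _))))
  refine le_wDist ((hxa.mono (deleteEdges_le _)).trans (hadj.reachable.trans
    (hby.mono (deleteEdges_le _)))) fun p ↦ ?_
  rcases p.exists_deleteEdges_or_cross hw with ⟨q, -⟩ | ⟨a', b', hab', q₁, q₂, hq⟩
  · exact (hab (hxa.symm.trans (q.reachable.trans hby.symm))).elim
  rw [Sym2.eq_iff] at hab'
  rcases hab' with ⟨rfl, rfl⟩ | ⟨rfl, rfl⟩
  · linarith [wDist_le_pathWeight hwF q₁, wDist_le_pathWeight hwF q₂]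
  · exact (hab (hxa.symm.trans q₁.reachable)).elim

end Bridge

section SwapTree

omit [Fintype V] [DecidableEq V]

variable {G T : SimpleGraph V} {root : V} {e f : Sym2 V} {v u x y : V}

lemma deleteEdges_le_swapTree : T.deleteEdges {e} ≤ swapTree T e f := by
  intro x y h
  simp_all [swapTree, h.ne]

lemma swapTree_adj (hvu : v ≠ u) : (swapTree T e s(v, u)).Adj v u := by
  simp [swapTree, hvu]

lemma swapTree_le (hTG : T ≤ G) (hf : G.Adj v u) : swapTree T e s(v, u) ≤ G := by
  intro x y h
  simp only [swapTree, fromEdgeSet_adj, Set.mem_union, Set.mem_sdiff, Set.mem_singleton_iff,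
    Sym2.eq_iff] at h
  rcases h with ⟨⟨h, -⟩ | ⟨rfl, rfl⟩ | ⟨rfl, rfl⟩, -⟩
  exacts [hTG h, hf, hf.symm]

lemma swapTree_deleteEdges (hf : f ∉ (T.deleteEdges {e}).edgeSet) :
    (swapTree T e f).deleteEdges {f} = T.deleteEdges {e} := by
  ext x y
  simp only [edgeSet_deleteEdges] at hf
  simp only [swapTree, deleteEdges_adj, fromEdgeSet_adj, Set.mem_union, Set.mem_sdiff,
    Set.mem_singleton_iff]
  constructor
  · rintro ⟨⟨(h | hf'), -⟩, hne⟩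
    exacts [h, (hne hf').elim]
  · rintro ⟨h, hne⟩
    refine ⟨⟨Or.inl ⟨h, hne⟩, h.ne⟩, fun hxy ↦ hf ?_⟩
    rw [← hxy]
    exact ⟨h, hne⟩

lemma VSwap.not_reachable (hu : VSwap G T root e v u) :
    ¬ (T.deleteEdges {e}).Reachable v u :=
  fun h ↦ hu.2.2.2 (hu.2.2.1.trans h)

lemma VSwap.swapTree_deleteEdges (hu : VSwap G T root e v u) :
    (swapTree T e s(v, u)).deleteEdges {s(v, u)} = T.deleteEdges {e} :=
  _root_.swapTree_deleteEdges fun h ↦ hu.not_reachable (Adj.reachable h)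

lemma VSwap.isBridge_swapTree (hu : VSwap G T root e v u) :
    (swapTree T e s(v, u)).IsBridge s(v, u) := by
  rw [isBridge_iff, hu.swapTree_deleteEdges]
  exact hu.not_reachable

lemma reachable_deleteEdges_of_mem_De (hT : T.Connected) (hx : x ∈ De T root e)
    (hy : y ∈ De T root e) : (T.deleteEdges {e}).Reachable x y := by
  rcases hT.reachable_deleteEdges_or_or e root x y with h | h | h
  exacts [(hx h).elim, h, (hy h).elim]

lemma reachable_deleteEdges_or_mem_Ue_De (hT : T.Connected) (x y : V) :
    (T.deleteEdges {e}).Reachable x y ∨ (x ∈ Ue T root e ∧ y ∈ De T root e) ∨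
      (y ∈ Ue T root e ∧ x ∈ De T root e) := by
  by_cases hx : x ∈ Ue T root e <;> by_cases hy : y ∈ Ue T root e
  · exact Or.inl ((hx : (T.deleteEdges {e}).Reachable root x).symm.trans hy)
  · exact Or.inr (Or.inl ⟨hx, hy⟩)
  · exact Or.inr (Or.inr ⟨hy, hx⟩)
  · exact Or.inl (reachable_deleteEdges_of_mem_De hT hx hy)

lemma VSwap.swapTree_connected (hT : T.Connected) (hu : VSwap G T root e v u) :
    (swapTree T e s(v, u)).Connected := by
  refine (connected_iff_exists_forall_reachable _).mpr ⟨v, fun x ↦ ?_⟩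
  rcases hT.reachable_deleteEdges_or_or e v u x with h | h | h
  · exact (hu.not_reachable h).elim
  · exact (swapTree_adj hu.1.ne).reachable.trans (h.mono deleteEdges_le_swapTree)
  · exact h.mono deleteEdges_le_swapTree

end SwapTree

section SwapTreeDistance

omit [DecidableEq V]

variable {w : Sym2 V → ℝ} {G T : SimpleGraph V} {root : V} {e : Sym2 V} {v u x y : V}

omit [Fintype V] in
lemma SimpleGraph.IsAcyclic.wDist_eq_of_reachable_deleteEdges (hT : T.IsAcyclic)
    (he : e ∈ T.edgeSet) (hw : ∀ a ∈ T.edgeSet, 0 ≤ w a)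
    (hxy : (T.deleteEdges {e}).Reachable x y) :
    wDist T w x y = wDist (T.deleteEdges {e}) w x y := by
  cases e with | h a b =>
  exact (isAcyclic_iff_forall_isBridge.mp hT he).wDist_eq_of_reachable hw hxy

omit [Fintype V] in
lemma VSwap.wDist_swapTree_of_reachable (hT : T.IsAcyclic) (he : e ∈ T.edgeSet)
    (hw : ∀ a ∈ G.edgeSet, 0 ≤ w a) (hTG : T ≤ G) (hu : VSwap G T root e v u)
    (hxy : (T.deleteEdges {e}).Reachable x y) :
    wDist (swapTree T e s(v, u)) w x y = wDist T w x y := by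
  rw [hT.wDist_eq_of_reachable_deleteEdges he (fun a ha ↦ hw a (edgeSet_mono hTG ha)) hxy,
    ← hu.swapTree_deleteEdges]
  exact hu.isBridge_swapTree.wDist_eq_of_reachable
    (fun a ha ↦ hw a (edgeSet_mono (swapTree_le hTG hu.1) ha)) (hu.swapTree_deleteEdges ▸ hxy)

lemma VSwap.wDist_swapTree_of_mem_Ue_De (hT : T.IsTree) (he : e ∈ T.edgeSet)
    (hw : ∀ a ∈ G.edgeSet, 0 ≤ w a) (hTG : T ≤ G) (hu : VSwap G T root e v u)
    (hx : x ∈ Ue T root e) (hy : y ∈ De T root e) :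
    wDist (swapTree T e s(v, u)) w x y = wDist T w x v + w s(v, u) + wDist T w u y := by
  have hwT : ∀ a ∈ T.edgeSet, 0 ≤ w a := fun a ha ↦ hw a (edgeSet_mono hTG ha)
  have hxv : (T.deleteEdges {e}).Reachable x v :=
    (hx : (T.deleteEdges {e}).Reachable root x).symm.trans hu.2.2.1
  have huy := reachable_deleteEdges_of_mem_De hT.connected hu.2.2.2 hy
  rw [hT.isAcyclic.wDist_eq_of_reachable_deleteEdges he hwT hxv,
    hT.isAcyclic.wDist_eq_of_reachable_deleteEdges he hwT huy, ← hu.swapTree_deleteEdges]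
  exact hu.isBridge_swapTree.wDist_eq_of_reachable_left_right
    (fun a ha ↦ hw a (edgeSet_mono (swapTree_le hTG hu.1) ha)) (swapTree_adj hu.1.ne)
    (hu.swapTree_deleteEdges ▸ hxv) (hu.swapTree_deleteEdges ▸ huy)

end SwapTreeDistance

section Stretch

omit [DecidableEq V]

variable {w : Sym2 V → ℝ} {H T' : SimpleGraph V}

lemma finite_setOf_exists_pair (P : V → V → Prop) (f : V → V → ℝ) :
    {r | ∃ x y, P x y ∧ r = f x y}.Finite :=
  (Set.finite_range fun p : V × V ↦ f p.1 p.2).subset fun _ ⟨x, y, _, hr⟩ ↦ ⟨(x, y), hr.symm⟩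

omit [Fintype V] in
lemma stretch_nonneg (hwH : ∀ a ∈ H.edgeSet, 0 ≤ w a) (hwT' : ∀ a ∈ T'.edgeSet, 0 ≤ w a) :
    0 ≤ stretch H T' w :=
  Real.sSup_nonneg fun _ ⟨x, y, _, hr⟩ ↦
    hr ▸ div_nonneg (wDist_nonneg hwT' x y) (wDist_nonneg hwH x y)

lemma div_weight_le_stretch (hwH : ∀ a ∈ H.edgeSet, 0 < w a)
    (hwT' : ∀ a ∈ T'.edgeSet, 0 ≤ w a) {x y : V} (hxy : H.Adj x y) :
    wDist T' w x y / w s(x, y) ≤ stretch H T' w :=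
  (div_le_div_of_nonneg_left (wDist_nonneg hwT' x y) (wDist_pos hwH hxy.reachable hxy.ne)
    (wDist_le_of_adj (fun a ha ↦ (hwH a ha).le) hxy)).trans
    (le_csSup (finite_setOf_exists_pair _ _).bddAbove ⟨x, y, hxy.ne, rfl⟩)

lemma wDist_le_mul_pathWeight (hT' : T'.Connected) (hwT' : ∀ a ∈ T'.edgeSet, 0 ≤ w a) {K : ℝ}
    (h : ∀ x y, H.Adj x y → wDist T' w x y ≤ K * w s(x, y)) {x y : V} (p : H.Walk x y) :
    wDist T' w x y ≤ K * pathWeight w p := by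
  induction p with
  | nil => simp [wDist_self hwT']
  | @cons x z y hxz p ih =>
    rw [pathWeight_cons, mul_add]
    exact (wDist_triangle hwT' (hT' x z) (hT' z y)).trans (add_le_add (h x z hxz) ih)

lemma stretch_le_of_forall_adj (hH : H.Connected) (hwH : ∀ a ∈ H.edgeSet, 0 < w a)
    (hT' : T'.Connected) (hwT' : ∀ a ∈ T'.edgeSet, 0 ≤ w a) {K : ℝ} (hK : 0 ≤ K)
    (h : ∀ x y, H.Adj x y → wDist T' w x y ≤ K * w s(x, y)) : stretch H T' w ≤ K := by
  refine Real.sSup_le (fun _ ⟨x, y, hxy, hr⟩ ↦ ?_) hK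
  obtain ⟨p, hp⟩ := exists_walk_pathWeight_eq_wDist (w := w) (hH x y)
  rw [hr, div_le_iff₀ (wDist_pos hwH (hH x y) hxy), ← hp]
  exact wDist_le_mul_pathWeight hT' hwT' h p

end Stretch

section BestSwap

omit [DecidableEq V]

variable {w : Sym2 V → ℝ} {G T : SimpleGraph V} {root : V} {e : Sym2 V} {v u : V}

noncomputable def sameSideStretch (G T : SimpleGraph V) (w : Sym2 V → ℝ) (e : Sym2 V) : ℝ :=
  sSup {r | ∃ x y, ((G.deleteEdges {e}).Adj x y ∧ (T.deleteEdges {e}).Reachable x y) ∧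
    r = wDist T w x y / w s(x, y)}

lemma phi_le_phiMax {x y : V} (hxy : VSwap G T root e x y) :
    phi T w v u x y ≤ phiMax G T w root e v u :=
  le_csSup (finite_setOf_exists_pair _ _).bddAbove ⟨x, y, hxy, rfl⟩

lemma VSwap.stretch_swapTree_le (hT : T.IsTree) (he : e ∈ T.edgeSet)
    (hw : ∀ a ∈ G.edgeSet, 0 < w a) (hTG : T ≤ G) (hGe : (G.deleteEdges {e}).Connected)
    (hu : VSwap G T root e v u) :
    stretch (G.deleteEdges {e}) (swapTree T e s(v, u)) w ≤
      max (sameSideStretch G T w e) (phiMax G T w root e v u) := by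
  have hw₀ : ∀ a ∈ G.edgeSet, 0 ≤ w a := fun a ha ↦ (hw a ha).le
  have hK : 0 ≤ max (sameSideStretch G T w e) (phiMax G T w root e v u) :=
    le_max_of_le_left <| Real.sSup_nonneg fun _ ⟨x, y, ⟨hxy, _⟩, hr⟩ ↦ hr ▸
      div_nonneg (wDist_nonneg (fun a ha ↦ hw₀ a (edgeSet_mono hTG ha)) x y) (hw₀ _ hxy.1)
  have cross : ∀ x y, (G.deleteEdges {e}).Adj x y → x ∈ Ue T root e → y ∈ De T root e →
      wDist (swapTree T e s(v, u)) w x y ≤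
        max (sameSideStretch G T w e) (phiMax G T w root e v u) * w s(x, y) := by
    intro x y hxy hx hy
    rw [hu.wDist_swapTree_of_mem_Ue_De hT he hw₀ hTG hx hy, ← div_le_iff₀ (hw _ hxy.1)]
    exact le_max_of_le_right (phi_le_phiMax ⟨hxy.1, (deleteEdges_adj.mp hxy).2, hx, hy⟩)
  refine stretch_le_of_forall_adj hGe (fun a ha ↦ hw a (edgeSet_mono (deleteEdges_le _) ha))
    (hu.swapTree_connected hT.connected)
    (fun a ha ↦ hw₀ a (edgeSet_mono (swapTree_le hTG hu.1) ha)) hK fun x y hxy ↦ ?_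
  rcases reachable_deleteEdges_or_mem_Ue_De (root := root) hT.connected x y with
    hr | ⟨hx, hy⟩ | ⟨hy, hx⟩
  · rw [hu.wDist_swapTree_of_reachable hT.isAcyclic he hw₀ hTG hr, ← div_le_iff₀ (hw _ hxy.1)]
    exact le_max_of_le_left
      (le_csSup (finite_setOf_exists_pair _ _).bddAbove ⟨x, y, ⟨hxy, hr⟩, rfl⟩)
  · exact cross x y hxy hx hy
  · rw [wDist_comm, show s(x, y) = s(y, x) from Sym2.eq_swap]
    exact cross y x hxy.symm hy hx

lemma VSwap.le_stretch_swapTree (hT : T.IsTree) (he : e ∈ T.edgeSet)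
    (hw : ∀ a ∈ G.edgeSet, 0 < w a) (hTG : T ≤ G) (hu : VSwap G T root e v u) :
    max (sameSideStretch G T w e) (phiMax G T w root e v u) ≤
      stretch (G.deleteEdges {e}) (swapTree T e s(v, u)) w := by
  have hw₀ : ∀ a ∈ G.edgeSet, 0 ≤ w a := fun a ha ↦ (hw a ha).le
  have hwGe : ∀ a ∈ (G.deleteEdges {e}).edgeSet, 0 < w a :=
    fun a ha ↦ hw a (edgeSet_mono (deleteEdges_le _) ha)
  have hwT' : ∀ a ∈ (swapTree T e s(v, u)).edgeSet, 0 ≤ w a :=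
    fun a ha ↦ hw₀ a (edgeSet_mono (swapTree_le hTG hu.1) ha)
  have hσ := stretch_nonneg (fun a ha ↦ (hwGe a ha).le) hwT'
  refine max_le (Real.sSup_le (fun _ ⟨x, y, ⟨hxy, hr⟩, hr'⟩ ↦ ?_) hσ)
    (Real.sSup_le (fun _ ⟨x, y, hxy, hr'⟩ ↦ ?_) hσ)
  · rw [hr', ← hu.wDist_swapTree_of_reachable hT.isAcyclic he hw₀ hTG hr]
    exact div_weight_le_stretch hwGe hwT' hxy
  · rw [hr', phi, ← hu.wDist_swapTree_of_mem_Ue_De hT he hw₀ hTG hxy.2.2.1 hxy.2.2.2]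
    exact div_weight_le_stretch hwGe hwT' (deleteEdges_adj.mpr ⟨hxy.1, hxy.2.1⟩)

lemma VSwap.stretch_swapTree_eq (hT : T.IsTree) (he : e ∈ T.edgeSet)
    (hw : ∀ a ∈ G.edgeSet, 0 < w a) (hTG : T ≤ G) (hGe : (G.deleteEdges {e}).Connected)
    (hu : VSwap G T root e v u) :
    stretch (G.deleteEdges {e}) (swapTree T e s(v, u)) w =
      max (sameSideStretch G T w e) (phiMax G T w root e v u) :=
  le_antisymm (hu.stretch_swapTree_le hT he hw hTG hGe) (hu.le_stretch_swapTree hT he hw hTG)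

end BestSwap

theorem stmt_0_general (G T : SimpleGraph V) (w : Sym2 V → ℝ) (root : V)
    (hw : ∀ a ∈ G.edgeSet, 0 < w a)
    (h2ec : TwoEdgeConnected G)
    (hTG : T ≤ G) (hT : T.IsTree)
    (e : Sym2 V) (he : e ∈ T.edgeSet)
    (v : V)
    -- `f = (v, u) ∈ S(e, v)`; in particular `S(e, v) ≠ ∅`
    (u : V) (hu : VSwap G T root e v u)
    -- `f` minimizes `φ_e(f') = max_{g ∈ S(e)} φ(f', g)` among all edges of `S(e, v)`
    (hmin : ∀ u', VSwap G T root e v u' →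
      phiMax G T w root e v u ≤ phiMax G T w root e v u') :
    -- then `f` minimizes `σ_{G-e}(T_{e/f'})` among all edges of `S(e, v)`
    ∀ u', VSwap G T root e v u' →
      stretch (G.deleteEdges {e}) (swapTree T e (s(v, u))) w ≤
        stretch (G.deleteEdges {e}) (swapTree T e (s(v, u'))) w := by
  have hGe : (G.deleteEdges {e}).Connected := h2ec.2 e (edgeSet_mono hTG he)
  intro u' hu'
  rw [hu.stretch_swapTree_eq hT he hw hTG hGe, hu'.stretch_swapTree_eq hT he hw hTG hGe]
  exact max_le_max le_rfl (hmin u' hu')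

/-- every `v`-best cut edge for `e` is a `v`-best swap edge for `e`. -/
theorem stmt_0 (G T : SimpleGraph V) (w : Sym2 V → ℝ) (root : V)
    (hw : ∀ a ∈ G.edgeSet, 0 < w a)
    (h2ec : TwoEdgeConnected G)
    (hTG : T ≤ G) (hT : T.IsTree)
    (e : Sym2 V) (he : e ∈ T.edgeSet)
    (v : V) (hv : v ∈ Ue T root e)
    -- `f = (v, u) ∈ S(e, v)`; in particular `S(e, v) ≠ ∅`
    (u : V) (hu : VSwap G T root e v u)
    -- `f` minimizes `φ_e(f') = max_{g ∈ S(e)} φ(f', g)` among all edges of `S(e, v)`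
    (hmin : ∀ u', VSwap G T root e v u' →
      phiMax G T w root e v u ≤ phiMax G T w root e v u') :
    -- then `f` minimizes `σ_{G-e}(T_{e/f'})` among all edges of `S(e, v)`
    ∀ u', VSwap G T root e v u' →
      stretch (G.deleteEdges {e}) (swapTree T e (s(v, u))) w ≤
        stretch (G.deleteEdges {e}) (swapTree T e (s(v, u'))) w :=
  stmt_0_general G T w root hw h2ec hTG hT e he v u hu hmin
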